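/- arXiv:hep-th/0502030 — 2 statements merged into one kernel-verified Lean document; each statement's English description precedes it below -/
import Mathlib

section
/- For every positive integer m, the integral \(\int_0^\infty \frac{r^{2m-1}}{1+e^{2\pi r}}\,dr\) converges and equals \((-1)^{m-1}\,(1-2^{1-2m})\,\frac{B_{2m}}{4m}\), where \(B_{2m}\) denotes the \(2m\)-th Bernoulli number. -/
/-!
Since `1 / (1 + e^x) = ∑_{n ≥ 0} (-1)^n e^{-(n+1)x}` for `x > 0`, integrating termwise against
`r^k` with `∫_0^∞ r^k e^{-br} dr = k! / b^{k+1}` gives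
`∫_0^∞ r^k / (1 + e^{cr}) dr = k! / c^{k+1} · η(k+1)` with `η(s) = ∑ (-1)^n / (n+1)^s`;
the interchange is legitimate because the `η`-series converges absolutely. Splitting off the
even terms gives `η(s) = (1 - 2^{1-s}) ζ(s)`, and Euler's formula for `ζ(2m)` in terms of
`B_{2m}` finishes.
-/

open MeasureTheory Real Set
open scoped Nat

lemma hasSum_neg_one_pow_div_succ_pow {p : ℕ} (hp : p ≠ 0) {Z : ℝ}
    (hZ : HasSum (fun n : ℕ => 1 / (n : ℝ) ^ p) Z) :
    HasSum (fun n : ℕ => (-1) ^ n / ((n : ℝ) + 1) ^ p) ((1 - 2 ^ (1 - (p : ℤ))) * Z) := by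
  have hEven : HasSum (fun n : ℕ => if Even n then 1 / (n : ℝ) ^ p else 0) ((2 ^ p)⁻¹ * Z) :=
    add_zero ((2 ^ p)⁻¹ * Z) ▸ HasSum.even_add_odd
      (f := fun n : ℕ => if Even n then 1 / (n : ℝ) ^ p else 0)
      ((hZ.mul_left (2 ^ p)⁻¹).congr_fun fun n => by simp [mul_pow, mul_comm])
      (hasSum_zero.congr_fun fun n => by simp)
  have hAlt : HasSum (fun n : ℕ => (-1) ^ (n + 1) / (n : ℝ) ^ p) (Z - 2 * ((2 ^ p)⁻¹ * Z)) :=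
    (hZ.sub (hEven.mul_left 2)).congr_fun fun n => by
      rcases Nat.even_or_odd n with h | h
      · simp [h, h.add_one.neg_one_pow]; ring
      · simp [Nat.not_even_iff_odd.mpr h, h.add_one.neg_one_pow]
  have hvalue : Z - 2 * ((2 ^ p)⁻¹ * Z) = (1 - 2 ^ (1 - (p : ℤ))) * Z := by
    rw [zpow_sub₀ two_ne_zero, zpow_one, zpow_natCast]
    ring
  rw [hvalue, ← hasSum_nat_add_iff' 1] at hAlt
  simpa [hp, pow_succ] using hAlt

lemma integral_pow_mul_exp_neg_mul_Ioi (k : ℕ) {b : ℝ} (hb : 0 < b) :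
    ∫ r in Ioi (0 : ℝ), r ^ k * exp (-(b * r)) = k ! / b ^ (k + 1) := by
  have h := integral_rpow_mul_exp_neg_mul_Ioi (a := k + 1) (by positivity) hb
  rw [add_sub_cancel_right, Gamma_nat_eq_factorial, ← Nat.cast_add_one] at h
  simp only [rpow_natCast] at h
  rw [h, div_pow, one_pow, one_div_mul_eq_div]

lemma integrableOn_pow_mul_exp_neg_mul_Ioi (k : ℕ) {b : ℝ} (hb : 0 < b) :
    IntegrableOn (fun r : ℝ => r ^ k * exp (-(b * r))) (Ioi 0) := by
  simpa using integrableOn_rpow_mul_exp_neg_mul_rpow (s := k) (p := 1)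
    (by linarith [k.cast_nonneg (α := ℝ)]) one_pos hb

lemma hasSum_neg_one_pow_mul_exp_neg_succ_mul {x : ℝ} (hx : 0 < x) :
    HasSum (fun n : ℕ => (-1) ^ n * exp (-((n + 1) * x))) (1 + exp x)⁻¹ := by
  have hq : |-exp (-x)| < 1 := by simpa using hx
  have hvalue : exp (-x) * (1 - -exp (-x))⁻¹ = (1 + exp x)⁻¹ := by
    rw [exp_neg, sub_neg_eq_add]
    field_simp
    ring
  refine hvalue ▸ ((hasSum_geometric_of_abs_lt_one hq).mul_left (exp (-x))).congr_fun fun n => ?_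
  rw [neg_pow (exp (-x)), ← exp_nat_mul, mul_left_comm, ← exp_add]
  ring_nf

lemma integrableOn_pow_div_one_add_exp (k : ℕ) {c : ℝ} (hc : 0 < c) :
    IntegrableOn (fun r : ℝ => r ^ k / (1 + exp (c * r))) (Ioi 0) := by
  refine (integrableOn_pow_mul_exp_neg_mul_Ioi k hc).mono'
    ((continuous_pow k).div (by fun_prop) fun r => by positivity).aestronglyMeasurable ?_
  filter_upwards [ae_restrict_mem measurableSet_Ioi] with r (hr : 0 < r)
  rw [norm_of_nonneg (by positivity), exp_neg, ← div_eq_mul_inv]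
  gcongr
  linarith

lemma integral_pow_div_one_add_exp {k : ℕ} {c : ℝ} (hc : 0 < c) {η : ℝ}
    (hη : HasSum (fun n : ℕ => (-1) ^ n / ((n : ℝ) + 1) ^ (k + 1)) η) :
    ∫ r in Ioi (0 : ℝ), r ^ k / (1 + exp (c * r)) = k ! / c ^ (k + 1) * η := by
  let F : ℕ → ℝ → ℝ := fun n r => (-1) ^ n * (r ^ k * exp (-(c * (n + 1) * r)))
  have hb (n : ℕ) : 0 < c * (n + 1) := by positivity
  have hF_int (n : ℕ) : IntegrableOn (F n) (Ioi 0) :=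
    (integrableOn_pow_mul_exp_neg_mul_Ioi k (hb n)).const_mul _
  have hF_integral (n : ℕ) :
      ∫ r in Ioi 0, F n r = k ! / c ^ (k + 1) * ((-1) ^ n / ((n : ℝ) + 1) ^ (k + 1)) := by
    rw [integral_const_mul, integral_pow_mul_exp_neg_mul_Ioi k (hb n), mul_pow]
    field_simp
  have hF_norm (n : ℕ) : ∫ r in Ioi 0, ‖F n r‖ = |∫ r in Ioi 0, F n r| := by
    rw [integral_const_mul, abs_mul, abs_neg_one_pow, one_mul,
      abs_of_nonneg (setIntegral_nonneg measurableSet_Ioi fun r (hr : 0 < r) => by positivity)]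
    refine setIntegral_congr_fun measurableSet_Ioi fun r (hr : 0 < r) => ?_
    rw [norm_mul, norm_pow, norm_neg, norm_one, one_pow, one_mul, norm_of_nonneg (by positivity)]
  have hF_sum : HasSum (fun n => ∫ r in Ioi 0, F n r) (k ! / c ^ (k + 1) * η) :=
    (hη.mul_left _).congr_fun hF_integral
  have hF_tsum : ∀ r ∈ Ioi (0 : ℝ), ∑' n, F n r = r ^ k / (1 + exp (c * r)) := by
    intro r (hr : 0 < r)
    refine (((hasSum_neg_one_pow_mul_exp_neg_succ_mul (mul_pos hc hr)).mul_left (r ^ k)).congr_fun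
      fun n => ?_).tsum_eq
    simp only [F]
    ring_nf
  rw [← setIntegral_congr_fun measurableSet_Ioi hF_tsum]
  exact (hasSum_integral_of_summable_integral_norm hF_int
    (hF_sum.summable.abs.congr fun n => (hF_norm n).symm)).unique hF_sum

/-- For every positive integer `m`, the integral `∫_0^∞ r^(2m-1)/(1+e^(2πr)) dr`
converges and equals `(-1)^(m-1) (1 - 2^(1-2m)) B_{2m}/(4m)`. -/
theorem fermi_dirac_integral_eq_bernoulli (m : ℕ) (hm : 1 ≤ m) :
    IntegrableOn (fun r : ℝ => r ^ (2 * m - 1) / (1 + Real.exp (2 * π * r))) (Ioi 0) ∧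
    ∫ r in Ioi (0 : ℝ), r ^ (2 * m - 1) / (1 + Real.exp (2 * π * r)) =
      (-1 : ℝ) ^ (m - 1) * (1 - (2 : ℝ) ^ ((1 : ℤ) - 2 * m)) *
        (((bernoulli (2 * m) : ℚ) : ℝ) / (4 * m)) := by
  obtain ⟨M, rfl⟩ := Nat.exists_eq_add_of_le' hm
  have hk : 2 * (M + 1) = 2 * M + 1 + 1 := by ring
  have hz : ((2 * M + 1 + 1 : ℕ) : ℤ) = 2 * ((M + 1 : ℕ) : ℤ) := by push_cast; ring
  have hη := hasSum_neg_one_pow_div_succ_pow (by omega) (hasSum_zeta_nat M.add_one_ne_zero)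
  rw [hk, hz] at hη
  rw [hk, Nat.add_sub_cancel]
  refine ⟨integrableOn_pow_div_one_add_exp _ (by positivity), ?_⟩
  rw [integral_pow_div_one_add_exp (by positivity) hη, Nat.factorial_succ (2 * M + 1),
    Nat.add_sub_cancel, Nat.add_sub_cancel]
  generalize (2 : ℝ) ^ ((1 : ℤ) - 2 * ((M + 1 : ℕ) : ℤ)) = t
  push_cast
  field_simp
  ring
end

section
/- Let \(\alpha>0\) be real, \(\ell\) a natural number, and \(s\) a complex number with \(\operatorname{Re} s > \ell+1\). Then \[\int_{0}^{\infty} t^{s-1}\Big(\int_{0}^{\infty} r^{2\ell+1}\,\tanh(\pi r)\, e^{-t(r^{2}+\alpha^{2})}\,dr\Big)dt = \tfrac12\,\Gamma(\ell+1)\,\Gamma(s-\ell-1)\,\alpha^{2\ell+2-2s} \;-\; 2\,\Gamma(s)\int_{0}^{\infty} \frac{r^{2\ell+1}}{(r^{2}+\alpha^{2})^{s}\,(1+e^{2\pi r})}\,dr,\] where all integrals converge (the last integral converges for every complex \(s\)). -/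
/-!
Writing `tanh (π r) = 1 - 2 / (1 + exp (2 π r))` splits the inner integral into a Gaussian moment
`∫ r ^ (2ℓ+1) e^{-t (r² + α²)} dr = Γ(ℓ+1) t^{-(ℓ+1)} e^{-α² t} / 2`, whose Mellin transform in `t`
is a Gamma value, and a remainder weighted by `1 / (1 + exp (2 π r))`. For the remainder the two
integrations can be interchanged (Fubini–Tonelli, the weight decaying exponentially), and the
Mellin transform of `e^{-t L}` is `Γ(s) L^{-s}`.
-/

open MeasureTheory Real Set Filter Asymptotics

theorem Complex.ofReal_sq_cpow {a : ℝ} (ha : 0 < a) (w : ℂ) :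
    ((a ^ 2 : ℝ) : ℂ) ^ w = (a : ℂ) ^ (2 * w) := by
  rw [sq, ofReal_mul, mul_cpow_ofReal_nonneg ha.le ha.le, ← cpow_add _ _ (ofReal_ne_zero.2 ha.ne'),
    two_mul]

theorem HasMellin.congr_Ioi {f g : ℝ → ℂ} {s m : ℂ} (hf : HasMellin f s m)
    (hfg : EqOn f g (Ioi 0)) : HasMellin g s m := by
  have h : EqOn (fun t : ℝ => (t : ℂ) ^ (s - 1) • f t) (fun t => (t : ℂ) ^ (s - 1) • g t)
      (Ioi 0) := fun t ht => by simp only [hfg ht]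
  exact ⟨hf.1.congr_fun h measurableSet_Ioi,
    (setIntegral_congr_fun measurableSet_Ioi h).symm.trans hf.2⟩

theorem HasMellin.sub {f g : ℝ → ℂ} {s a b : ℂ} (hf : HasMellin f s a) (hg : HasMellin g s b) :
    HasMellin (fun t => f t - g t) s (a - b) := by
  simpa only [hf.2, hg.2] using hasMellin_sub hf.1 hg.1

theorem HasMellin.const_mul {f : ℝ → ℂ} {s a : ℂ} (hf : HasMellin f s a) (c : ℂ) :
    HasMellin (fun t => c * f t) s (c * a) := by
  simpa only [hf.2, smul_eq_mul] using hasMellin_const_smul hf.1 c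

theorem hasMellin_exp_neg {s : ℂ} (hs : 0 < s.re) :
    HasMellin (fun t => (rexp (-t) : ℂ)) s (Complex.Gamma s) := by
  refine ⟨?_, by rw [← Complex.GammaIntegral_eq_mellin, Complex.Gamma_eq_integral hs]⟩
  simpa only [MellinConvergent, smul_eq_mul, mul_comm] using Complex.GammaIntegral_convergent hs

theorem hasMellin_exp_neg_mul {a : ℝ} (ha : 0 < a) {s : ℂ} (hs : 0 < s.re) :
    HasMellin (fun t => (rexp (-t * a) : ℂ)) s ((a : ℂ) ^ (-s) * Complex.Gamma s) := by
  have h := hasMellin_exp_neg hs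
  have hf : (fun t : ℝ => (rexp (-t * a) : ℂ)) = fun t => (rexp (-(a * t)) : ℂ) := by
    ext t; ring_nf
  rw [hf]
  exact ⟨(MellinConvergent.comp_mul_left ha).2 h.1, by
    rw [mellin_comp_mul_left (fun t => (rexp (-t) : ℂ)) _ ha, h.2, smul_eq_mul]⟩

theorem hasMellin_cpow_mul_exp_neg_mul {a : ℝ} (ha : 0 < a) (b : ℂ) {s : ℂ}
    (hs : 0 < (s + b).re) :
    HasMellin (fun t => (t : ℂ) ^ b * rexp (-t * a)) s
      ((a : ℂ) ^ (-(s + b)) * Complex.Gamma (s + b)) :=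
  have h := hasMellin_exp_neg_mul ha hs
  ⟨MellinConvergent.cpow_smul.2 h.1, (mellin_cpow_smul _ _ _).trans h.2⟩

theorem Real.tanh_eq_one_sub_two_div (x : ℝ) : tanh x = 1 - 2 / (1 + rexp (2 * x)) := by
  have h : rexp (2 * x) = rexp x * rexp x := by rw [two_mul, exp_add]
  rw [tanh_eq, exp_neg, h]
  field_simp
  ring

theorem integrableOn_pow_mul_exp_neg_mul_sq_add (n : ℕ) {t : ℝ} (ht : 0 < t) (a : ℝ) :
    IntegrableOn (fun r : ℝ => r ^ n * rexp (-t * (r ^ 2 + a))) (Ioi 0) := by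
  refine IntegrableOn.congr_fun ((integrableOn_rpow_mul_exp_neg_mul_sq ht
    (neg_one_lt_zero.trans_le n.cast_nonneg)).const_mul (rexp (-t * a))) (fun r _ => ?_)
    measurableSet_Ioi
  simp only [rpow_natCast, mul_add, exp_add]
  ring

theorem integral_Ioi_pow_mul_exp_neg_mul_sq_add (ℓ : ℕ) {t : ℝ} (ht : 0 < t) (a : ℝ) :
    ∫ r in Ioi 0, r ^ (2 * ℓ + 1) * rexp (-t * (r ^ 2 + a)) =
      Real.Gamma (ℓ + 1) / 2 * t ^ (-(ℓ + 1 : ℝ)) * rexp (-t * a) := by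
  have h := integral_rpow_mul_exp_neg_mul_rpow two_pos (q := (2 * ℓ + 1 : ℕ))
    (neg_one_lt_zero.trans_le (Nat.cast_nonneg _)) ht
  have hq : ((2 * ℓ + 1 : ℕ) + 1 : ℝ) / 2 = ℓ + 1 := by push_cast; ring
  rw [neg_div, hq] at h
  calc ∫ r in Ioi 0, r ^ (2 * ℓ + 1) * rexp (-t * (r ^ 2 + a))
      = rexp (-t * a) * ∫ r in Ioi 0, r ^ ((2 * ℓ + 1 : ℕ) : ℝ) * rexp (-t * r ^ (2 : ℝ)) := by
        rw [← integral_const_mul]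
        refine setIntegral_congr_fun measurableSet_Ioi fun r _ => ?_
        simp only [rpow_natCast, rpow_two, mul_add, exp_add]
        ring
    _ = _ := by rw [h]; ring

theorem integral_Ioi_pow_mul_tanh_mul_exp_neg_mul_sq_add (ℓ : ℕ) {t : ℝ} (ht : 0 < t) (a : ℝ) :
    ∫ r in Ioi 0, r ^ (2 * ℓ + 1) * tanh (π * r) * rexp (-t * (r ^ 2 + a)) =
      Real.Gamma (ℓ + 1) / 2 * t ^ (-(ℓ + 1 : ℝ)) * rexp (-t * a) -
        2 * ∫ r in Ioi 0, r ^ (2 * ℓ + 1) / (1 + rexp (2 * π * r)) * rexp (-t * (r ^ 2 + a)) := by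
  have hI := integrableOn_pow_mul_exp_neg_mul_sq_add (2 * ℓ + 1) ht a
  have hw : ∀ r, 0 < 1 + rexp (2 * π * r) := fun r => by positivity
  have hIw : IntegrableOn
      (fun r : ℝ => r ^ (2 * ℓ + 1) / (1 + rexp (2 * π * r)) * rexp (-t * (r ^ 2 + a)))
      (Ioi 0) := by
    refine IntegrableOn.congr_fun (hI.bdd_mul (c := 1) (f := fun r => (1 + rexp (2 * π * r))⁻¹)
      (by fun_prop) (.of_forall fun r => ?_)) (fun r _ => by ring) measurableSet_Ioi
    rw [norm_inv, Real.norm_of_nonneg (hw r).le]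
    exact inv_le_one_of_one_le₀ (by linarith [exp_pos (2 * π * r)])
  rw [← integral_Ioi_pow_mul_exp_neg_mul_sq_add ℓ ht a, ← integral_const_mul,
    ← integral_sub hI (hIw.const_mul 2)]
  refine setIntegral_congr_fun measurableSet_Ioi fun r _ => ?_
  simp only [tanh_eq_one_sub_two_div, ← mul_assoc]
  ring

theorem ofReal_integral_Ioi_pow_mul_tanh_mul_exp_neg_mul_sq_add (ℓ : ℕ) {t : ℝ} (ht : 0 < t)
    (a : ℝ) :
    ((∫ r in Ioi 0, r ^ (2 * ℓ + 1) * tanh (π * r) * rexp (-t * (r ^ 2 + a)) : ℝ) : ℂ) =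
      Complex.Gamma (ℓ + 1) / 2 * ((t : ℂ) ^ (-(ℓ + 1 : ℂ)) * rexp (-t * a)) -
        2 * ∫ r in Ioi (0 : ℝ),
          (r : ℂ) ^ (2 * ℓ + 1) / (1 + rexp (2 * π * r)) * rexp (-t * (r ^ 2 + a)) := by
  rw [integral_Ioi_pow_mul_tanh_mul_exp_neg_mul_sq_add ℓ ht a]
  push_cast [← integral_complex_ofReal, ← Complex.Gamma_ofReal, Complex.ofReal_cpow ht.le]
  ring

theorem integral_Ioi_norm_cpow_mul_exp_neg_mul {a : ℝ} (ha : 0 < a) (s : ℂ) (hs : 0 < s.re) :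
    ∫ t in Ioi (0 : ℝ), ‖(t : ℂ) ^ (s - 1) * rexp (-t * a)‖ = Real.Gamma s.re / a ^ s.re := by
  rw [← setIntegral_congr_fun measurableSet_Ioi
      (f := fun t : ℝ => t ^ (s.re - 1) * rexp (-(a * t))),
    Real.integral_rpow_mul_exp_neg_mul_Ioi hs ha, one_div, Real.inv_rpow ha.le, inv_mul_eq_div]
  intro t ht
  simp only [norm_mul, Complex.norm_cpow_eq_rpow_re_of_pos ht, Complex.norm_real,
    Real.norm_of_nonneg (exp_pos _).le, Complex.sub_re, Complex.one_re]
  ring_nf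

theorem hasMellin_integral_mul_exp_neg_mul {X : Type*} [MeasurableSpace X] {μ : Measure X}
    [SFinite μ] {g : X → ℂ} {L : X → ℝ}
    (hg : AEStronglyMeasurable g μ) (hL : Measurable L) (hL0 : ∀ x, 0 < L x) {s : ℂ}
    (hs : 0 < s.re) (hint : Integrable (fun x => g x / (L x : ℂ) ^ s) μ) :
    HasMellin (fun t => ∫ x, g x * rexp (-t * L x) ∂μ) s
      (Complex.Gamma s * ∫ x, g x / (L x : ℂ) ^ s ∂μ) := by
  set F : ℝ × X → ℂ := fun p => (p.1 : ℂ) ^ (s - 1) * (g p.2 * rexp (-p.1 * L p.2))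
  have hslice : ∀ x, HasMellin (fun t => g x * rexp (-t * L x)) s
      (g x * ((L x : ℂ) ^ (-s) * Complex.Gamma s)) :=
    fun x => (hasMellin_exp_neg_mul (hL0 x) hs).const_mul (g x)
  have hF_meas : AEStronglyMeasurable F ((volume.restrict (Ioi 0)).prod μ) := by
    refine (Measurable.aestronglyMeasurable ?_).mul (hg.comp_snd.mul
      (Measurable.aestronglyMeasurable ?_)) <;> fun_prop
  have hF : Integrable F ((volume.restrict (Ioi 0)).prod μ) := by
    refine (integrable_prod_iff' hF_meas).2 ⟨.of_forall fun x => (hslice x).1, ?_⟩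
    refine (hint.norm.const_mul (Real.Gamma s.re)).congr (.of_forall fun x => ?_)
    have hnorm : ∀ t, ‖F (t, x)‖ = ‖g x‖ * ‖(t : ℂ) ^ (s - 1) * rexp (-t * L x)‖ := fun t => by
      simp only [F, norm_mul]; ring
    simp only [hnorm, integral_const_mul, integral_Ioi_norm_cpow_mul_exp_neg_mul (hL0 x) s hs,
      norm_div, Complex.norm_cpow_eq_rpow_re_of_pos (hL0 x)]
    ring
  have hpull : ∀ t : ℝ, ∫ x, F (t, x) ∂μ = (t : ℂ) ^ (s - 1) • ∫ x, g x * rexp (-t * L x) ∂μ :=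
    fun t => integral_const_mul ((t : ℂ) ^ (s - 1)) fun x => g x * rexp (-t * L x)
  refine ⟨hF.integral_prod_left.congr (.of_forall hpull), ?_⟩
  calc mellin (fun t => ∫ x, g x * rexp (-t * L x) ∂μ) s
      = ∫ t in Ioi 0, ∫ x, F (t, x) ∂μ := by simp only [mellin, hpull]
    _ = ∫ x, g x * ((L x : ℂ) ^ (-s) * Complex.Gamma s) ∂μ := by
      rw [integral_integral_swap hF]
      exact integral_congr_ae (.of_forall fun x => (hslice x).2)
    _ = Complex.Gamma s * ∫ x, g x / (L x : ℂ) ^ s ∂μ := by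
      rw [← integral_const_mul]
      refine integral_congr_ae (.of_forall fun x => ?_)
      simp only [Complex.cpow_neg, div_eq_mul_inv]
      ring

theorem norm_pow_div_cpow_mul_one_add_exp {α r : ℝ} (hα : 0 < α) (hr : 0 ≤ r) (n : ℕ) (s : ℂ) :
    ‖(r : ℂ) ^ n / ((((r ^ 2 + α ^ 2 : ℝ)) : ℂ) ^ s * (1 + rexp (2 * π * r)))‖ =
      r ^ n * (r ^ 2 + α ^ 2) ^ (-s.re) / (1 + rexp (2 * π * r)) := by
  have hL : 0 < r ^ 2 + α ^ 2 := by positivity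
  rw [← Complex.ofReal_one, ← Complex.ofReal_add, norm_div, norm_mul, norm_pow, Complex.norm_real,
    Complex.norm_real, Complex.norm_cpow_eq_rpow_re_of_pos hL, Real.norm_of_nonneg hr,
    Real.norm_of_nonneg (by positivity), rpow_neg hL.le]
  field_simp

theorem isBigO_pow_div_cpow_mul_one_add_exp {α : ℝ} (hα : 0 < α) (n : ℕ) (s : ℂ) :
    (fun r : ℝ => (r : ℂ) ^ n / ((((r ^ 2 + α ^ 2 : ℝ)) : ℂ) ^ s * (1 + rexp (2 * π * r))))
      =O[atTop] fun r => rexp (-π * r) := by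
  set c := |s.re|
  have hbound : ∀ᶠ r : ℝ in atTop,
      ‖(r : ℂ) ^ n / ((((r ^ 2 + α ^ 2 : ℝ)) : ℂ) ^ s * (1 + rexp (2 * π * r)))‖ ≤
        2 ^ c * (r ^ (n + 2 * c) * rexp (-(2 * π) * r)) := by
    filter_upwards [eventually_ge_atTop 1, eventually_ge_atTop α] with r hr1 hrα
    have hr0 : 0 < r := one_pos.trans_le hr1
    have hL1 : 1 ≤ r ^ 2 + α ^ 2 := by nlinarith
    have hL2 : r ^ 2 + α ^ 2 ≤ 2 * r ^ 2 := by nlinarith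
    have hpow : (r ^ 2 + α ^ 2) ^ (-s.re) ≤ 2 ^ c * r ^ (2 * c) := calc
      (r ^ 2 + α ^ 2) ^ (-s.re) ≤ (r ^ 2 + α ^ 2) ^ c :=
          rpow_le_rpow_of_exponent_le hL1 (neg_le_abs _)
      _ ≤ (2 * r ^ 2) ^ c := rpow_le_rpow (by positivity) hL2 (abs_nonneg _)
      _ = 2 ^ c * r ^ (2 * c) := by
        rw [mul_rpow zero_le_two (by positivity), ← rpow_natCast, ← rpow_mul hr0.le]; norm_num
    have hexp : (1 + rexp (2 * π * r))⁻¹ ≤ rexp (-(2 * π) * r) := by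
      rw [neg_mul, exp_neg]
      exact inv_anti₀ (exp_pos _) (by linarith)
    rw [norm_pow_div_cpow_mul_one_add_exp hα hr0.le, div_eq_mul_inv, rpow_add hr0, rpow_natCast]
    calc r ^ n * (r ^ 2 + α ^ 2) ^ (-s.re) * (1 + rexp (2 * π * r))⁻¹
        ≤ r ^ n * (2 ^ c * r ^ (2 * c)) * rexp (-(2 * π) * r) := by gcongr
      _ = _ := by ring
  have hdecay : (fun r : ℝ => r ^ (n + 2 * c) * rexp (-(2 * π) * r)) =O[atTop]
      fun r => rexp (-π * r) := by
    refine ((isLittleO_rpow_exp_pos_mul_atTop _ pi_pos).isBigO.mul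
      (isBigO_refl (fun r : ℝ => rexp (-(2 * π) * r)) atTop)).congr_right fun r => ?_
    rw [← exp_add]; ring_nf
  exact (IsBigO.of_bound' (hbound.mono fun r h => h.trans (le_abs_self _))).trans
    (hdecay.const_mul_left _)

theorem integrableOn_pow_div_cpow_mul_one_add_exp {α : ℝ} (hα : 0 < α) (n : ℕ) (s : ℂ) :
    IntegrableOn
      (fun r : ℝ => (r : ℂ) ^ n / ((((r ^ 2 + α ^ 2 : ℝ)) : ℂ) ^ s * (1 + rexp (2 * π * r))))
      (Ioi 0) := by
  have hcont : Continuous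
      (fun r : ℝ => (r : ℂ) ^ n / ((((r ^ 2 + α ^ 2 : ℝ)) : ℂ) ^ s * (1 + rexp (2 * π * r)))) := by
    have hL : ∀ r : ℝ, 0 < r ^ 2 + α ^ 2 := fun r => by positivity
    refine Continuous.div (by fun_prop) (Continuous.mul ?_ (by fun_prop)) fun r => ?_
    · exact (by fun_prop : Continuous fun r : ℝ => (((r ^ 2 + α ^ 2 : ℝ)) : ℂ)).cpow
        continuous_const fun r => Complex.ofReal_mem_slitPlane.2 (hL r)
    · rw [← Complex.ofReal_one, ← Complex.ofReal_add]
      exact mul_ne_zero (Complex.cpow_ne_zero_iff.2 (.inl (by exact_mod_cast (hL r).ne')))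
        (by exact_mod_cast (by positivity : 1 + rexp (2 * π * r) ≠ 0))
  exact (integrableOn_Ici_iff_integrableOn_Ioi (by finiteness)).mp <|
    (hcont.continuousOn.locallyIntegrableOn measurableSet_Ici).integrableOn_of_isBigO_atTop
      (isBigO_pow_div_cpow_mul_one_add_exp hα n s)
      ⟨Ioi 1, Ioi_mem_atTop 1, exp_neg_integrableOn_Ioi 1 pi_pos⟩

/-- Exact form of the even-dimensional identity component of the spectral zeta
function: for `α > 0`, `ℓ : ℕ` and `Re s > ℓ + 1`,
`∫_0^∞ t^(s-1) (∫_0^∞ r^(2ℓ+1) tanh(πr) e^(-t(r²+α²)) dr) dt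
  = ½ Γ(ℓ+1) Γ(s-ℓ-1) α^(2ℓ+2-2s) - 2 Γ(s) ∫_0^∞ r^(2ℓ+1)/((r²+α²)^s (1+e^(2πr))) dr`,
all integrals converging (the last one for every complex `s`). -/
theorem zeta_identity_component_even_dim (α : ℝ) (hα : 0 < α) (ℓ : ℕ) (s : ℂ)
    (hs : (ℓ : ℝ) + 1 < s.re) :
    (∀ s' : ℂ, IntegrableOn
      (fun r : ℝ => (r : ℂ) ^ (2 * ℓ + 1) /
        ((((r ^ 2 + α ^ 2 : ℝ)) : ℂ) ^ s' * (1 + Real.exp (2 * π * r)))) (Ioi 0)) ∧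
    IntegrableOn
      (fun t : ℝ => (t : ℂ) ^ (s - 1) *
        ((∫ r in Ioi (0 : ℝ), r ^ (2 * ℓ + 1) * Real.tanh (π * r) *
            Real.exp (-t * (r ^ 2 + α ^ 2)) : ℝ) : ℂ)) (Ioi 0) ∧
    ∫ t in Ioi (0 : ℝ), (t : ℂ) ^ (s - 1) *
        ((∫ r in Ioi (0 : ℝ), r ^ (2 * ℓ + 1) * Real.tanh (π * r) *
            Real.exp (-t * (r ^ 2 + α ^ 2)) : ℝ) : ℂ) =
      (1 / 2) * Complex.Gamma ((ℓ : ℂ) + 1) * Complex.Gamma (s - (ℓ : ℂ) - 1) *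
          (α : ℂ) ^ (2 * (ℓ : ℂ) + 2 - 2 * s) -
        2 * Complex.Gamma s *
          ∫ r in Ioi (0 : ℝ), (r : ℂ) ^ (2 * ℓ + 1) /
            ((((r ^ 2 + α ^ 2 : ℝ)) : ℂ) ^ s * (1 + Real.exp (2 * π * r))) := by
  have hweighted : (fun r : ℝ => (r : ℂ) ^ (2 * ℓ + 1) / (1 + rexp (2 * π * r)) /
      (((r ^ 2 + α ^ 2 : ℝ)) : ℂ) ^ s) = fun r : ℝ => (r : ℂ) ^ (2 * ℓ + 1) /
      ((((r ^ 2 + α ^ 2 : ℝ)) : ℂ) ^ s * (1 + rexp (2 * π * r))) :=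
    funext fun r => by rw [div_div, mul_comm (1 + _)]
  have hR := hasMellin_integral_mul_exp_neg_mul (μ := volume.restrict (Ioi 0))
    (g := fun r : ℝ => (r : ℂ) ^ (2 * ℓ + 1) / (1 + rexp (2 * π * r)))
    (L := fun r : ℝ => r ^ 2 + α ^ 2)
    (Measurable.aestronglyMeasurable (by fun_prop)) (by fun_prop) (fun r => by positivity)
    (by linarith)
    (by rw [hweighted]; exact integrableOn_pow_div_cpow_mul_one_add_exp hα _ s)
  have hA := (hasMellin_cpow_mul_exp_neg_mul (pow_pos hα 2) (-(ℓ + 1)) (s := s) (by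
    simp only [Complex.add_re, Complex.neg_re, Complex.one_re, Complex.natCast_re]
    linarith)).const_mul (Complex.Gamma (ℓ + 1) / 2)
  have h := (hA.sub (hR.const_mul 2)).congr_Ioi fun t ht =>
    (ofReal_integral_Ioi_pow_mul_tanh_mul_exp_neg_mul_sq_add ℓ ht (α ^ 2)).symm
  refine ⟨fun s' => integrableOn_pow_div_cpow_mul_one_add_exp hα _ s', h.1, h.2.trans ?_⟩
  rw [hweighted, show s + -(ℓ + 1) = s - ℓ - 1 by ring, Complex.ofReal_sq_cpow hα,
    show 2 * -(s - ℓ - 1) = 2 * (ℓ : ℂ) + 2 - 2 * s by ring]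
  ring
end
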